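/- The identity functor on a category with finite products is a linear assignment (i.e., every object carries a natural commutative monoid object structure with the identity as idempotency isomorphism) if and only if the category is semi-additive (has finite biproducts). -/

import Mathlib

/-!
With the monoid structures natural in the object, `f + g := prod.lift f g ≫ plus` and
`0 := terminal.from _ ≫ zero` make every hom-set a commutative monoid, and naturality of `plus`
and `zero` says exactly that composition is bilinear. In a category enriched in commutative
monoids the canonical bicone on a finite product satisfies `∑ j, π j ≫ ι j = 𝟙`, and this
identity makes it a biproduct. Conversely, with binary biproducts the codiagonal
`prod.fst + prod.snd` is a natural commutative monoid structure on every object.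
-/

open CategoryTheory CategoryTheory.Limits

/-- A linear assignment structure on the identity functor of a category with finite
products: every object carries a commutative monoid object structure, naturally in the
object, with the identity serving as the idempotency isomorphism `ν`. -/
structure IdLinearAssignment (C : Type*) [Category C] [HasFiniteProducts C] where
  plus : ∀ X : C, X ⨯ X ⟶ X
  zero : ∀ X : C, ⊤_ C ⟶ X
  plus_natural : ∀ {X Y : C} (f : X ⟶ Y), prod.map f f ≫ plus Y = plus X ≫ f
  zero_natural : ∀ {X Y : C} (f : X ⟶ Y), zero X ≫ f = zero Y
  plus_assoc : ∀ X : C, prod.map (plus X) (𝟙 X) ≫ plus X =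
    (Limits.prod.associator X X X).hom ≫ prod.map (𝟙 X) (plus X) ≫ plus X
  plus_comm : ∀ X : C, (prod.braiding X X).hom ≫ plus X = plus X
  plus_unit : ∀ X : C, prod.lift (terminal.from X ≫ zero X) (𝟙 X) ≫ plus X = 𝟙 X

universe v u

/-- The analogue of `Preadditive` with commutative monoids in place of groups; without negation
the zero laws no longer follow from additivity and have to be required. -/
class CMonEnriched (C : Type u) [Category.{v} C] where
  homMonoid : ∀ X Y : C, AddCommMonoid (X ⟶ Y)
  add_comp : ∀ {X Y Z : C} (f f' : X ⟶ Y) (g : Y ⟶ Z), (f + f') ≫ g = f ≫ g + f' ≫ g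
  comp_add : ∀ {X Y Z : C} (f : X ⟶ Y) (g g' : Y ⟶ Z), f ≫ (g + g') = f ≫ g + f ≫ g'
  zero_comp : ∀ {X Y Z : C} (g : Y ⟶ Z), (0 : X ⟶ Y) ≫ g = 0
  comp_zero : ∀ {X Y Z : C} (f : X ⟶ Y), f ≫ (0 : Y ⟶ Z) = 0

attribute [reducible, instance] CMonEnriched.homMonoid

namespace CMonEnriched

variable {C : Type u} [Category.{v} C] [CMonEnriched C]

instance (priority := 100) toHasZeroMorphisms : HasZeroMorphisms C where
  zero _ _ := ⟨0⟩
  comp_zero f _ := comp_zero f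
  zero_comp _ _ _ g := zero_comp g

def leftComp {X Y : C} (Z : C) (f : X ⟶ Y) : (Y ⟶ Z) →+ (X ⟶ Z) where
  toFun g := f ≫ g
  map_zero' := comp_zero f
  map_add' := comp_add f

def rightComp (X : C) {Y Z : C} (g : Y ⟶ Z) : (X ⟶ Y) →+ (X ⟶ Z) where
  toFun f := f ≫ g
  map_zero' := zero_comp g
  map_add' f f' := add_comp f f' g

theorem sum_comp {ι : Type*} (s : Finset ι) {X Y Z : C} (f : ι → (X ⟶ Y)) (g : Y ⟶ Z) :
    (∑ i ∈ s, f i) ≫ g = ∑ i ∈ s, f i ≫ g :=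
  map_sum (rightComp X g) f s

theorem comp_sum {ι : Type*} (s : Finset ι) {X Y Z : C} (f : X ⟶ Y) (g : ι → (Y ⟶ Z)) :
    f ≫ (∑ i ∈ s, g i) = ∑ i ∈ s, f ≫ g i :=
  map_sum (leftComp Z f) g s

section Fintype

variable {J : Type*} [Fintype J]

def isBilimitOfTotal {F : J → C} (b : Bicone F) (total : ∑ j, b.π j ≫ b.ι j = 𝟙 b.pt) :
    b.IsBilimit where
  isLimit :=
    { lift := fun s => (∑ j, s.π.app ⟨j⟩ ≫ b.ι j : s.pt ⟶ b.pt)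
      fac := fun s j => by
        classical
        obtain ⟨j⟩ := j
        simp [sum_comp, b.ι_π, comp_dite]
      uniq := fun s m hm => by
        -- `b.toCone.pt` is `b.pt` only up to unfolding, which `rw [← total]` does not see through
        change s.pt ⟶ b.pt at m
        rw [← Category.comp_id m, ← total, comp_sum]
        exact Finset.sum_congr rfl fun j _ => by simp [← hm ⟨j⟩] }
  isColimit :=
    { desc := fun s => (∑ j, b.π j ≫ s.ι.app ⟨j⟩ : b.pt ⟶ s.pt)
      fac := fun s j => by
        classical
        obtain ⟨j⟩ := j
        simp [comp_sum, ← Category.assoc, b.ι_π, dite_comp]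
      uniq := fun s m hm => by
        change b.pt ⟶ s.pt at m
        rw [← Category.id_comp m, ← total, sum_comp]
        exact Finset.sum_congr rfl fun j _ => by simp [← hm ⟨j⟩] }

theorem total_of_isLimit {F : J → C} (b : Bicone F)
    (hb : IsLimit b.toCone) : ∑ j, b.π j ≫ b.ι j = 𝟙 b.pt := by
  classical
  refine hb.hom_ext fun ⟨j⟩ => ?_
  simp [sum_comp, b.ι_π, comp_dite]

end Fintype

theorem hasBiproduct_of_hasProduct {J : Type*} [Finite J] (F : J → C) [HasProduct F] :
    HasBiproduct F := by
  cases nonempty_fintype J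
  let b := Bicone.ofLimitCone (limit.isLimit (Discrete.functor F))
  have hb : IsLimit b.toCone := (limit.isLimit _).ofIsoLimit (Cone.ext (Iso.refl _)
    fun _ => (Category.id_comp _).symm)
  exact HasBiproduct.mk ⟨b, isBilimitOfTotal b (total_of_isLimit b hb)⟩

theorem hasFiniteBiproducts [HasFiniteProducts C] : HasFiniteBiproducts C :=
  ⟨fun _ => ⟨fun F => hasBiproduct_of_hasProduct F⟩⟩

end CMonEnriched

namespace IdLinearAssignment

variable {C : Type u} [Category.{v} C] [HasFiniteProducts C] (L : IdLinearAssignment C)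

theorem lift_plus_comp {X Y Z : C} (f g : X ⟶ Y) (h : Y ⟶ Z) :
    (prod.lift f g ≫ L.plus Y) ≫ h = prod.lift (f ≫ h) (g ≫ h) ≫ L.plus Z := by
  rw [Category.assoc, ← L.plus_natural, prod.lift_map_assoc]

theorem comp_lift_plus {W X Y : C} (h : W ⟶ X) (f g : X ⟶ Y) :
    h ≫ prod.lift f g ≫ L.plus Y = prod.lift (h ≫ f) (h ≫ g) ≫ L.plus Y := by
  rw [prod.comp_lift_assoc]

theorem lift_plus_comm {X Y : C} (f g : X ⟶ Y) :
    prod.lift f g ≫ L.plus Y = prod.lift g f ≫ L.plus Y := by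
  have : prod.lift f g = prod.lift g f ≫ (prod.braiding Y Y).hom := by
    apply prod.hom_ext <;>
      simp only [Category.assoc, prod.braiding_hom, prod.lift_fst, prod.lift_snd]
  rw [this, Category.assoc, L.plus_comm]

theorem lift_plus_assoc {X Y : C} (f g h : X ⟶ Y) :
    prod.lift (prod.lift f g ≫ L.plus Y) h ≫ L.plus Y =
      prod.lift f (prod.lift g h ≫ L.plus Y) ≫ L.plus Y := by
  have hl : prod.lift (prod.lift f g ≫ L.plus Y) h =
      prod.lift (prod.lift f g) h ≫ prod.map (L.plus Y) (𝟙 Y) := by simp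
  have ha : prod.lift (prod.lift f g) h ≫ (prod.associator Y Y Y).hom =
      prod.lift f (prod.lift g h) := by
    apply prod.hom_ext
    · simp only [prod.associator_hom, Category.assoc, prod.lift_fst, prod.lift_fst_assoc]
    · apply prod.hom_ext <;> simp only [prod.associator_hom, Category.assoc, prod.lift_fst,
        prod.lift_snd, prod.lift_fst_assoc]
  have hr : prod.lift f (prod.lift g h ≫ L.plus Y) =
      prod.lift f (prod.lift g h) ≫ prod.map (𝟙 Y) (L.plus Y) := by
    rw [prod.lift_map, Category.comp_id]
  rw [hl, hr, ← ha, Category.assoc, L.plus_assoc, Category.assoc, Category.assoc]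

theorem zero_lift_plus {X Y : C} (f : X ⟶ Y) :
    prod.lift (terminal.from X ≫ L.zero Y) f ≫ L.plus Y = f := by
  have : prod.lift (terminal.from X ≫ L.zero Y) f =
      f ≫ prod.lift (terminal.from Y ≫ L.zero Y) (𝟙 Y) := by simp
  rw [this, Category.assoc, L.plus_unit, Category.comp_id]

@[reducible]
noncomputable def homAddCommMonoid (X Y : C) : AddCommMonoid (X ⟶ Y) :=
  letI : Add (X ⟶ Y) := ⟨fun f g => prod.lift f g ≫ L.plus Y⟩
  letI : Zero (X ⟶ Y) := ⟨terminal.from X ≫ L.zero Y⟩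
  { add_assoc := L.lift_plus_assoc
    zero_add := L.zero_lift_plus
    add_zero f := (L.lift_plus_comm f 0).trans (L.zero_lift_plus f)
    add_comm := L.lift_plus_comm
    nsmul := nsmulRec }

@[reducible]
noncomputable def toCMonEnriched : CMonEnriched C where
  homMonoid := L.homAddCommMonoid
  add_comp := L.lift_plus_comp
  comp_add := L.comp_lift_plus
  zero_comp g := by
    change (terminal.from _ ≫ L.zero _) ≫ g = terminal.from _ ≫ L.zero _
    rw [Category.assoc, L.zero_natural]
  comp_zero f := by
    change f ≫ terminal.from _ ≫ L.zero _ = terminal.from _ ≫ L.zero _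
    rw [← Category.assoc, terminal.comp_from]

section OfBiproducts

attribute [local instance] SemiadditiveOfBinaryBiproducts.addCommMonoidHomOfHasBinaryBiproducts

open SemiadditiveOfBinaryBiproducts in
noncomputable def ofHasBinaryBiproducts [HasZeroMorphisms C] [HasBinaryBiproducts C] :
    IdLinearAssignment C where
  plus _ := prod.fst + prod.snd
  zero _ := 0
  plus_natural f := by rw [comp_add, add_comp, prod.map_fst, prod.map_snd]
  zero_natural _ := zero_comp
  plus_assoc _ := by
    simp only [comp_add, prod.map_fst, prod.map_snd, prod.associator_hom, prod.lift_fst,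
      prod.lift_snd, prod.lift_snd_assoc, Category.comp_id]
    exact add_assoc _ _ _
  plus_comm _ := by rw [comp_add, prod.braiding_hom, prod.lift_fst, prod.lift_snd, add_comm]
  plus_unit _ := by rw [comp_add, prod.lift_fst, prod.lift_snd, comp_zero, zero_add]

end OfBiproducts

end IdLinearAssignment

/-- The identity functor on a category with finite products is a linear assignment (with the
identity as idempotency isomorphism) if and only if the category is semi-additive, i.e. has
finite biproducts. -/
theorem stmt9 (C : Type*) [Category C] [HasFiniteProducts C] :
    Nonempty (IdLinearAssignment C) ↔
      ∃ Z : HasZeroMorphisms C, @HasFiniteBiproducts C _ Z := by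
  constructor
  · rintro ⟨L⟩
    let := L.toCMonEnriched
    exact ⟨inferInstance, CMonEnriched.hasFiniteBiproducts⟩
  · rintro ⟨_, _⟩
    have := hasBinaryBiproducts_of_finite_biproducts C
    exact ⟨.ofHasBinaryBiproducts⟩
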